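/- arXiv:2206.03623 — 3 statements merged into one kernel-verified Lean document; each statement's English description precedes it below -/
import Mathlib

section
/- Correctness of Paillier decryption with g = 1+n: let p ≠ q be primes with gcd(pq, (p−1)(q−1)) = 1, n = pq, λ = lcm(p−1, q−1). For any message m < n and ζ coprime to n, letting c ≡ (1+n)^m · ζ^n (mod n²), one has c^λ ≡ 1 + m·λ·n (mod n²); consequently L(c^λ mod n²) · λ^{-1} ≡ m (mod n), where L(x) = (x−1)/n. -/
set_option linter.unnecessarySimpa false

lemma one_add_pow_modEq (n k : ℕ) : (1 + n) ^ k ≡ 1 + k * n [MOD n ^ 2] := by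
  induction k with
  | zero => simp [Nat.ModEq.refl]
  | succ k ih =>
    have h2 : (1 + n) ^ (k + 1) ≡ (1 + k * n) * (1 + n) [MOD n ^ 2] := by
      rw [pow_succ]; exact ih.mul_right _
    have h3 : (1 + k * n) * (1 + n) = 1 + (k + 1) * n + k * n ^ 2 := by ring
    have h4 : 1 + (k + 1) * n + k * n ^ 2 ≡ 1 + (k + 1) * n [MOD n ^ 2] := by
      simp [Nat.ModEq, Nat.add_mul_mod_self_right]
    exact h2.trans (h3 ▸ h4)

/-- Correctness of Paillier decryption with `g = 1 + n`: for `c ≡ (1+n)^m ζ^n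
(mod n²)`, raising to `λ = lcm (p−1) (q−1)` gives `1 + mλn (mod n²)`, and the
`L`-function recovery `L(c^λ mod n²) · λ⁻¹` equals `m` in `ZMod n`. -/
theorem paillier_dec_correct (p q : ℕ) (hp : p.Prime) (hq : q.Prime)
    (hne : p ≠ q) (hco : Nat.Coprime (p * q) ((p - 1) * (q - 1)))
    (n lam : ℕ) (hn : n = p * q) (hlam : lam = Nat.lcm (p - 1) (q - 1))
    (m ζ c : ℕ) (hm : m < n) (hζ : Nat.Coprime ζ n)
    (hc : c ≡ (1 + n) ^ m * ζ ^ n [MOD n ^ 2]) :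
    c ^ lam ≡ 1 + m * lam * n [MOD n ^ 2] ∧
    (((c ^ lam % n ^ 2 - 1) / n : ℕ) : ZMod n) * (lam : ZMod n)⁻¹
      = (m : ZMod n) := by
  have hp2 : 2 ≤ p := hp.two_le
  have hq2 : 2 ≤ q := hq.two_le
  have hn2 : 2 ≤ n := by subst hn; nlinarith
  have hn0 : 0 < n := by omega
  -- lam coprime to n
  have hlamdvd : lam ∣ (p - 1) * (q - 1) := by
    rw [hlam]; exact Nat.lcm_dvd ⟨q - 1, rfl⟩ ⟨p - 1, Nat.mul_comm _ _⟩
  have hcolam : Nat.Coprime n lam := by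
    rw [hn]; exact Nat.Coprime.coprime_dvd_right hlamdvd hco
  -- ζ ^ (n * lam) ≡ 1 [MOD n ^ 2]
  have key : ∀ r s : ℕ, r.Prime → Nat.Coprime ζ r → (r - 1) ∣ lam →
      r ∣ n → ζ ^ (n * lam) ≡ 1 [MOD r ^ 2] := by
    intro r s hr hcor hdvd hrdvd
    have htot : Nat.totient (r ^ 2) = r * (r - 1) := by
      rw [Nat.totient_prime_pow hr (by norm_num)]; ring
    have hcor2 : Nat.Coprime ζ (r ^ 2) := hcor.pow_right 2
    have h1 : ζ ^ (r ^ 2).totient ≡ 1 [MOD r ^ 2] := Nat.ModEq.pow_totient hcor2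
    have hdvd2 : (r ^ 2).totient ∣ n * lam := by
      rw [htot]
      exact mul_dvd_mul hrdvd hdvd
    obtain ⟨k, hk⟩ := hdvd2
    calc ζ ^ (n * lam) = (ζ ^ (r ^ 2).totient) ^ k := by rw [← pow_mul, hk]
      _ ≡ 1 ^ k [MOD r ^ 2] := h1.pow k
      _ = 1 := one_pow k
  have hcp : Nat.Coprime ζ p := by
    have := hζ; rw [hn] at this; exact this.coprime_dvd_right ⟨q, rfl⟩
  have hcq : Nat.Coprime ζ q := by
    have := hζ; rw [hn] at this; exact this.coprime_dvd_right ⟨p, Nat.mul_comm _ _⟩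
  have hpdl : (p - 1) ∣ lam := hlam ▸ Nat.dvd_lcm_left _ _
  have hqdl : (q - 1) ∣ lam := hlam ▸ Nat.dvd_lcm_right _ _
  have hzp : ζ ^ (n * lam) ≡ 1 [MOD p ^ 2] := key p q hp hcp hpdl ⟨q, hn⟩
  have hzq : ζ ^ (n * lam) ≡ 1 [MOD q ^ 2] := key q p hq hcq hqdl ⟨p, by rw [hn, Nat.mul_comm]⟩
  have hcopq : Nat.Coprime (p ^ 2) (q ^ 2) :=
    Nat.Coprime.pow 2 2 ((Nat.coprime_primes hp hq).mpr hne)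
  have hzeta : ζ ^ (n * lam) ≡ 1 [MOD n ^ 2] := by
    have := (Nat.modEq_and_modEq_iff_modEq_mul hcopq).mp ⟨hzp, hzq⟩
    rwa [← mul_pow, ← hn] at this
  -- part 1
  have part1 : c ^ lam ≡ 1 + m * lam * n [MOD n ^ 2] := by
    calc c ^ lam ≡ ((1 + n) ^ m * ζ ^ n) ^ lam [MOD n ^ 2] := hc.pow lam
      _ = (1 + n) ^ (m * lam) * ζ ^ (n * lam) := by rw [mul_pow, ← pow_mul, ← pow_mul]
      _ ≡ (1 + (m * lam) * n) * 1 [MOD n ^ 2] :=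
          (one_add_pow_modEq n (m * lam)).mul hzeta
      _ = 1 + m * lam * n := by ring
  refine ⟨part1, ?_⟩
  -- compute c ^ lam % n ^ 2
  have hmod : c ^ lam % n ^ 2 = 1 + (m * lam % n) * n := by
    have h1 : 1 + m * lam * n ≡ 1 + (m * lam % n) * n [MOD n ^ 2] := by
      have : m * lam * n = (m * lam % n) * n + (m * lam / n) * n ^ 2 := by
        conv_lhs => rw [← Nat.mod_add_div (m * lam) n]
        ring
      rw [this, ← Nat.add_assoc]
      simpa [Nat.ModEq] using Nat.add_mul_mod_self_right (1 + m * lam % n * n) (m * lam / n) (n^2)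
    have h2 : 1 + (m * lam % n) * n < n ^ 2 := by
      have : m * lam % n ≤ n - 1 := by
        have := Nat.mod_lt (m * lam) hn0; omega
      have h3 : (m * lam % n) * n ≤ (n - 1) * n := Nat.mul_le_mul_right n this
      have h4 : (n - 1) * n = n * n - n := Nat.sub_one_mul n n
      have h5 : n ≤ n * n := Nat.le_mul_of_pos_left n hn0
      have h6 : n ^ 2 = n * n := sq n
      omega
    calc c ^ lam % n ^ 2 = (1 + (m * lam % n) * n) % n ^ 2 := part1.trans h1
      _ = 1 + (m * lam % n) * n := Nat.mod_eq_of_lt h2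
  rw [hmod]
  have hdiv : (1 + m * lam % n * n - 1) / n = m * lam % n := by
    simp [Nat.mul_div_cancel _ hn0]
  rw [hdiv]
  haveI : NeZero n := ⟨by omega⟩
  have hunit : IsUnit (lam : ZMod n) :=
    (ZMod.isUnit_iff_coprime lam n).mpr hcolam.symm
  have : ((m * lam % n : ℕ) : ZMod n) = (m : ZMod n) * (lam : ZMod n) := by
    push_cast [ZMod.natCast_mod]
    ring
  rw [this, mul_assoc, ZMod.mul_inv_of_unit _ hunit, mul_one]
end

section
/- Injectivity of Paillier encryption in the message coordinate: with n = pq (p ≠ q primes) and g = 1+n, if (1+n)^{m₁}·ζ₁ⁿ ≡ (1+n)^{m₂}·ζ₂ⁿ (mod n²) with m₁, m₂ < n and ζ₁, ζ₂ units coprime to n, and gcd(n, (p−1)(q−1)) = 1, then m₁ = m₂. -/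
/-!
Raising an encryption `(1 + n) ^ m * ζ ^ n` in `ZMod (n ^ 2)` to the power `φ n` kills the
randomness, since `φ (n ^ 2) = n * φ n`. What remains is `(1 + n) ^ (m * φ n) = 1 + m * φ n * n`,
because `n * n = 0`, and this determines `m * φ n` modulo `n`. When `n` is coprime to `φ n`
this determines `m` modulo `n`.
-/

open Nat

theorem Nat.totient_mul_self (n : ℕ) : φ (n * n) = n * φ n := by
  rcases n.eq_zero_or_pos with rfl | hn
  · simp
  have h := Nat.totient_gcd_mul_totient_mul n n
  rw [Nat.gcd_self] at h
  exact mul_left_cancel₀ (Nat.totient_pos.mpr hn).ne' (h.trans (by ring))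

theorem one_add_pow_of_mul_self_eq_zero {R : Type*} [CommSemiring R] {x : R} (hx : x * x = 0)
    (k : ℕ) : (1 + x) ^ k = 1 + k * x := by
  induction k with
  | zero => simp
  | succ k ih =>
    calc (1 + x) ^ (k + 1) = 1 + (k + 1) * x + k * (x * x) := by rw [pow_succ, ih]; ring
      _ = 1 + ((k + 1 : ℕ) : R) * x := by rw [hx]; push_cast; ring

namespace ZMod

theorem one_add_natCast_pow_eq_iff {n : ℕ} (hn : n ≠ 0) {a b : ℕ} :
    (1 + (n : ZMod (n ^ 2))) ^ a = (1 + n) ^ b ↔ a ≡ b [MOD n] := by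
  have hsq : (n : ZMod (n ^ 2)) * n = 0 := by
    rw [← Nat.cast_mul, ← sq, ZMod.natCast_self]
  rw [one_add_pow_of_mul_self_eq_zero hsq, one_add_pow_of_mul_self_eq_zero hsq, add_right_inj,
    ← Nat.cast_mul, ← Nat.cast_mul, ZMod.natCast_eq_natCast_iff, sq]
  exact Nat.ModEq.mul_right_cancel_iff' hn

theorem units_pow_mul_totient_eq_one {n : ℕ} (ζ : (ZMod (n ^ 2))ˣ) : ζ ^ (n * φ n) = 1 := by
  rcases eq_or_ne n 0 with rfl | hn
  · simp
  have : NeZero (n ^ 2) := ⟨pow_ne_zero 2 hn⟩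
  rw [← Nat.totient_mul_self, ← sq]
  exact ZMod.pow_totient ζ

theorem eq_of_one_add_pow_mul_pow_eq {n : ℕ} (hco : n.Coprime (φ n)) {m₁ m₂ : ℕ}
    (hm₁ : m₁ < n) (hm₂ : m₂ < n) {ζ₁ ζ₂ : (ZMod (n ^ 2))ˣ}
    (heq : (1 + (n : ZMod (n ^ 2))) ^ m₁ * (ζ₁ : ZMod (n ^ 2)) ^ n
         = (1 + (n : ZMod (n ^ 2))) ^ m₂ * (ζ₂ : ZMod (n ^ 2)) ^ n) :
    m₁ = m₂ := by
  have hunit (ζ : (ZMod (n ^ 2))ˣ) : ((ζ : ZMod (n ^ 2)) ^ n) ^ φ n = 1 := by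
    rw [← pow_mul, ← Units.val_pow_eq_pow_val, units_pow_mul_totient_eq_one, Units.val_one]
  have hpow : (1 + (n : ZMod (n ^ 2))) ^ (m₁ * φ n) = (1 + n) ^ (m₂ * φ n) := by
    simpa only [mul_pow, hunit, mul_one, ← pow_mul] using congrArg (· ^ φ n) heq
  have hmod := (one_add_natCast_pow_eq_iff (by omega)).mp hpow
  exact (hmod.cancel_right_of_coprime hco).eq_of_lt_of_lt hm₁ hm₂

end ZMod

theorem Nat.totient_mul_of_prime_of_ne {p q : ℕ} (hp : p.Prime) (hq : q.Prime) (hne : p ≠ q) :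
    φ (p * q) = (p - 1) * (q - 1) := by
  rw [Nat.totient_mul ((Nat.coprime_primes hp hq).mpr hne), Nat.totient_prime hp,
    Nat.totient_prime hq]

/-- Injectivity of Paillier encryption in the message coordinate: two
encryptions of messages `m₁, m₂ < n` that coincide in `ZMod (n²)` must
encrypt the same message. -/
theorem paillier_message_injective (p q : ℕ) (hp : p.Prime) (hq : q.Prime)
    (hne : p ≠ q) (n : ℕ) (hn : n = p * q)
    (hco : Nat.Coprime n ((p - 1) * (q - 1)))
    (m₁ m₂ : ℕ) (hm₁ : m₁ < n) (hm₂ : m₂ < n)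
    (ζ₁ ζ₂ : (ZMod (n ^ 2))ˣ)
    (heq : (1 + (n : ZMod (n ^ 2))) ^ m₁ * (ζ₁ : ZMod (n ^ 2)) ^ n
         = (1 + (n : ZMod (n ^ 2))) ^ m₂ * (ζ₂ : ZMod (n ^ 2)) ^ n) :
    m₁ = m₂ := by
  rw [← Nat.totient_mul_of_prime_of_ne hp hq hne, ← hn] at hco
  exact ZMod.eq_of_one_add_pow_mul_pow_eq hco hm₁ hm₂ heq
end

section
/- Paillier signature verification correctness: let n = pq with p ≠ q primes, gcd(n, (p−1)(q−1)) = 1, λ = lcm(p−1, q−1), g = 1+n, and let h be a unit of ℤ/n²ℤ. Define σ ∈ ℤ/nℤ by σ = L(h^λ mod n²)·λ^{-1} mod n and σ̃ = (h·g^{−σ})^{n^{-1} mod λ} mod n. Then g^σ · σ̃^n ≡ h (mod n²), provided h·g^{−σ} is an n-th residue mod n² (which holds since h^λ·g^{−σλ} ≡ 1 (mod n²) and gcd(n,λ)=1). -/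
private lemma units_pow_lcm_eq_one (p q : ℕ) (hp : p.Prime) (hq : q.Prime)
    (hne : p ≠ q) (n : ℕ) (hn : n = p * q) (x : ZMod n) (hx : IsUnit x) :
    x ^ Nat.lcm (p - 1) (q - 1) = 1 := by
  subst hn
  haveI : Fact p.Prime := ⟨hp⟩
  haveI : Fact q.Prime := ⟨hq⟩
  have hcop : Nat.Coprime p q := (Nat.coprime_primes hp hq).mpr hne
  let e := ZMod.chineseRemainder hcop
  apply e.injective
  rw [map_pow, map_one]
  have h1 : (e x).1 ≠ 0 := by
    have : IsUnit (e x).1 := (hx.map e.toRingHom).map (RingHom.fst _ _)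
    exact this.ne_zero
  have h2 : (e x).2 ≠ 0 := by
    have : IsUnit (e x).2 := (hx.map e.toRingHom).map (RingHom.snd _ _)
    exact this.ne_zero
  obtain ⟨a, ha⟩ := Nat.dvd_lcm_left (p - 1) (q - 1)
  obtain ⟨b, hb⟩ := Nat.dvd_lcm_right (p - 1) (q - 1)
  ext
  · rw [Prod.pow_fst, Prod.fst_one, ha, pow_mul, ZMod.pow_card_sub_one_eq_one h1, one_pow]
  · rw [Prod.pow_snd, Prod.snd_one, hb, pow_mul, ZMod.pow_card_sub_one_eq_one h2, one_pow]

/-- Paillier signature verification correctness: with `g = 1 + n` (given as a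
unit `gu` of `ZMod (n²)`), `σ = L(h^λ) · λ⁻¹ (mod n)` and
`σ̃ = (h · g^{−σ})^{n⁻¹ mod λ}`, verification succeeds: `g^σ · σ̃^n = h`. -/
theorem paillier_sign_correct (p q : ℕ) (hp : p.Prime) (hq : q.Prime)
    (hne : p ≠ q) (hco : Nat.Coprime (p * q) ((p - 1) * (q - 1)))
    (n lam : ℕ) (hn : n = p * q) (hlam : lam = Nat.lcm (p - 1) (q - 1))
    (gu : (ZMod (n ^ 2))ˣ) (hg : (gu : ZMod (n ^ 2)) = 1 + n)
    (h : (ZMod (n ^ 2))ˣ)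
    (σ : ZMod n)
    (hσ : σ = (((((h : ZMod (n ^ 2)) ^ lam).val - 1) / n : ℕ) : ZMod n)
            * (lam : ZMod n)⁻¹)
    (n' : ℕ) (hn' : n * n' ≡ 1 [MOD lam]) :
    gu ^ σ.val * ((h * (gu ^ σ.val)⁻¹) ^ n') ^ n = h := by
  have hn2 : 2 ≤ n := by
    rw [hn]; calc 2 ≤ 2 * 2 := by norm_num
                 _ ≤ p * q := Nat.mul_le_mul hp.two_le hq.two_le
  haveI : NeZero n := ⟨by omega⟩
  haveI : NeZero (n ^ 2) := ⟨by positivity⟩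
  have hnn : (n : ZMod (n ^ 2)) * n = 0 := by
    rw [← Nat.cast_mul, ← pow_two, ZMod.natCast_self]
  have hgpow : ∀ k : ℕ, ((gu : ZMod (n ^ 2)))^k = 1 + (k : ZMod (n ^ 2)) * n := by
    intro k
    induction k with
    | zero => simp
    | succ k ih =>
      rw [pow_succ ((gu : ZMod (n^2))) k, ih, hg]
      push_cast
      linear_combination (k : ZMod (n^2)) * hnn
  set x : ZMod (n ^ 2) := (h : ZMod (n ^ 2)) ^ lam with hx
  have hdvd : n ∣ n ^ 2 := dvd_pow_self n two_ne_zero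
  have hcast1 : (ZMod.castHom hdvd (ZMod n)) x = 1 := by
    rw [map_pow, hlam]
    exact units_pow_lcm_eq_one p q hp hq hne n hn _
      ((h.isUnit).map (ZMod.castHom hdvd (ZMod n)))
  have hval : x.val ≡ 1 [MOD n] := by
    have : ((x.val : ℕ) : ZMod n) = ((1 : ℕ) : ZMod n) := by
      rw [Nat.cast_one, ← hcast1, ZMod.castHom_apply, ← ZMod.natCast_val]
    exact (ZMod.natCast_eq_natCast_iff _ _ _).mp this
  have hval1 : 1 ≤ x.val := by
    rcases Nat.eq_zero_or_pos x.val with h0 | h0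
    · exfalso
      have h1 : n ∣ 1 := Nat.modEq_zero_iff_dvd.mp (h0 ▸ hval).symm
      have := Nat.le_of_dvd one_pos h1
      omega
    · exact h0
  set L : ℕ := (x.val - 1) / n with hL
  have hndvd : n ∣ x.val - 1 := (Nat.modEq_iff_dvd' hval1).mp hval.symm
  have hxval : x.val = 1 + n * L := by
    rw [hL, Nat.mul_div_cancel' hndvd]
    omega
  have hxeq : x = 1 + (L : ZMod (n ^ 2)) * n := by
    have hxc : ((x.val : ℕ) : ZMod (n ^ 2)) = x := by
      rw [ZMod.natCast_val, ZMod.cast_id]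
    rw [← hxc, hxval]
    push_cast
    ring
  have hlamdvd : lam ∣ (p - 1) * (q - 1) := by rw [hlam]; exact Nat.lcm_dvd_mul _ _
  have hlamco : Nat.Coprime lam n := by
    rw [hn]
    exact Nat.Coprime.coprime_dvd_left hlamdvd hco.symm
  have hσlam : (σ.val * lam) ≡ L [MOD n] := by
    have : ((σ.val * lam : ℕ) : ZMod n) = ((L : ℕ) : ZMod n) := by
      push_cast
      rw [ZMod.natCast_val, ZMod.cast_id, hσ, mul_assoc, mul_comm ((lam : ZMod n))⁻¹,
        ZMod.coe_mul_inv_eq_one lam hlamco, mul_one]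
    exact (ZMod.natCast_eq_natCast_iff _ _ _).mp this
  have hkey : (gu ^ σ.val) ^ lam = h ^ lam := by
    ext
    push_cast [Units.val_pow_eq_pow_val]
    rw [← pow_mul, hgpow, ← hx, hxeq]
    congr 1
    have heq : ((σ.val * lam : ℕ) : ZMod (n^2)) * n = ((L : ℕ) : ZMod (n^2)) * n := by
      rw [← Nat.cast_mul, ← Nat.cast_mul, (ZMod.natCast_eq_natCast_iff _ _ _).mpr ?_]
      rw [pow_two]
      exact hσlam.mul_right' n
    exact_mod_cast heq
  set w : (ZMod (n ^ 2))ˣ := h * (gu ^ σ.val)⁻¹ with hw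
  have hwlam : w ^ lam = 1 := by
    rw [hw, mul_pow, inv_pow, hkey, mul_inv_cancel]
  have hord : orderOf w ∣ lam := orderOf_dvd_of_pow_eq_one hwlam
  have hmod : n' * n ≡ 1 [MOD orderOf w] :=
    Nat.ModEq.of_dvd hord (by rw [mul_comm]; exact hn')
  have hwpow : (w ^ n') ^ n = w := by
    rw [← pow_mul]
    simpa using pow_eq_pow_iff_modEq.mpr hmod
  rw [hwpow, hw, mul_comm (h) ((gu ^ σ.val)⁻¹), ← mul_assoc, mul_inv_cancel, one_mul]
end
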